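/- Paley–Wiener–Zygmund theorem: Almost surely, the sample path t ↦ B(t,ω) of standard Brownian motion is nowhere differentiable on (0,1]. -/

import Mathlib

open MeasureTheory ProbabilityTheory Filter Set

noncomputable section

structure IsStdBM {Ω : Type*} [MeasurableSpace Ω] (P : Measure Ω) (B : ℝ → Ω → ℝ) : Prop where
  meas : ∀ t, Measurable (B t)
  start : ∀ ω, B 0 ω = 0
  cont : ∀ ω, Continuous fun t => B t ω
  indep : ∀ (n : ℕ) (t : Fin (n + 1) → ℝ), (∀ i, 0 ≤ t i) → Monotone t →
      iIndepFun
        (fun i : Fin n => fun ω => B (t i.succ) ω - B (t i.castSucc) ω) P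
  gauss : ∀ s t : ℝ, 0 ≤ s → s ≤ t →
      P.map (fun ω => B t ω - B s ω) = gaussianReal 0 (t - s).toNNReal

/-! If the path is differentiable at some `t ∈ (0,1]`, it is Lipschitz near `t` with some
constant `L`, so for every large `n` the three consecutive increments of mesh `1/n` just to the
right of `t` are at most `8L/n`. Such an increment is `N(0, 1/n)`, hence that small with
probability at most `8L/√n`; by independence all three are, with probability at most
`(8L/√n)³`, and a union bound over the `n` possible positions gives `512 L³/√n → 0`. -/

open Real Topology
open scoped NNReal ENNReal

lemma gaussianPDFReal_le (μ : ℝ) (v : ℝ≥0) (x : ℝ) :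
    gaussianPDFReal μ v x ≤ (√(2 * π * v))⁻¹ := by
  rw [gaussianPDFReal]
  refine mul_le_of_le_one_right (by positivity) (exp_le_one_iff.2 ?_)
  exact div_nonpos_of_nonpos_of_nonneg (neg_nonpos.2 (sq_nonneg _)) (by positivity)

lemma gaussianReal_Icc_neg_le (μ : ℝ) {v : ℝ≥0} (hv : v ≠ 0) {a : ℝ} (ha : 0 ≤ a) :
    gaussianReal μ v (Icc (-a) a) ≤ ENNReal.ofReal (a / √v) := by
  have h2 : 2 ≤ √(2 * π) := le_sqrt_of_sq_le (by nlinarith [pi_gt_three])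
  calc gaussianReal μ v (Icc (-a) a)
      = ∫⁻ x in Icc (-a) a, ENNReal.ofReal (gaussianPDFReal μ v x) := gaussianReal_apply μ hv _
    _ ≤ ∫⁻ _ in Icc (-a) a, ENNReal.ofReal (√(2 * π * v))⁻¹ :=
        setLIntegral_mono (by fun_prop) fun x _ =>
          ENNReal.ofReal_le_ofReal (gaussianPDFReal_le μ v x)
    _ = ENNReal.ofReal ((√(2 * π * v))⁻¹ * (2 * a)) := by
        rw [setLIntegral_const, Real.volume_Icc, ← ENNReal.ofReal_mul (by positivity)]
        ring_nf
    _ ≤ ENNReal.ofReal (a / √v) := by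
        refine ENNReal.ofReal_le_ofReal ?_
        rw [sqrt_mul (by positivity), mul_inv, div_eq_mul_inv]
        calc (√(2 * π))⁻¹ * (√v)⁻¹ * (2 * a) = 2 / √(2 * π) * (a * (√v)⁻¹) := by ring
          _ ≤ 1 * (a * (√v)⁻¹) := by
              gcongr
              rw [div_le_one (by positivity)]
              exact h2
          _ = a * (√v)⁻¹ := one_mul _

lemma DifferentiableAt.eventually_norm_sub_le_nat_mul {E : Type*} [NormedAddCommGroup E]
    [NormedSpace ℝ E] {f : ℝ → E} {t : ℝ} (h : DifferentiableAt ℝ f t) :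
    ∀ᶠ m : ℕ in atTop, ∀ s, |s - t| ≤ (m : ℝ)⁻¹ → ‖f s - f t‖ ≤ m * |s - t| := by
  obtain ⟨C, hC⟩ := h.hasFDerivAt.isBigO_sub.bound
  obtain ⟨δ, hδ, hball⟩ := Metric.eventually_nhds_iff.1 hC
  filter_upwards [eventually_ge_atTop ⌈C⌉₊,
    (tendsto_inv_atTop_nhds_zero_nat (𝕜 := ℝ)).eventually (gt_mem_nhds hδ)] with m hmC hmδ s hs
  calc ‖f s - f t‖ ≤ C * |s - t| := hball (by rw [Real.dist_eq]; linarith)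
    _ ≤ m * |s - t| := by gcongr; exact (Nat.le_ceil C).trans (by exact_mod_cast hmC)

def gridIncrement (f : ℝ → ℝ) (n j : ℕ) : ℝ := f ((j + 1) / n) - f (j / n)

lemma exists_forall_abs_gridIncrement_le {f : ℝ → ℝ} {t : ℝ} (ht : t ∈ Ioc 0 1) {n : ℕ}
    (hn : 0 < n) (N : ℕ) {L : ℝ} (hf : ∀ s, |s - t| ≤ (N + 1) / n → |f s - f t| ≤ L) :
    ∃ k ∈ Finset.Icc 1 n, ∀ i : Fin N, |gridIncrement f n (k + i)| ≤ 2 * L := by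
  have hn' : (0 : ℝ) < n := by exact_mod_cast hn
  -- `t ∈ ((k - 1)/n, k/n]`, so the grid points `(k + j)/n` with `j ≤ N` lie within `(N + 1)/n`.
  set k := ⌈n * t⌉₊
  have hk_ge : n * t ≤ k := Nat.le_ceil _
  have hk_lt : k < n * t + 1 := Nat.ceil_lt_add_one (by nlinarith [ht.1])
  have hnear : ∀ j : ℕ, j ≤ N → |((k : ℝ) + j) / n - t| ≤ (N + 1) / n := by
    intro j hj
    have hj' : (j : ℝ) ≤ N := by exact_mod_cast hj
    rw [show ((k : ℝ) + j) / n - t = (k + j - n * t) / n by field_simp, abs_div,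
      abs_of_pos hn', div_le_div_iff_of_pos_right hn', abs_le]
    constructor <;> linarith
  refine ⟨k, Finset.mem_Icc.2 ⟨Nat.one_le_iff_ne_zero.2 ?_, Nat.ceil_le.2 ?_⟩, fun i => ?_⟩
  · exact (Nat.ceil_pos.2 (mul_pos hn' ht.1)).ne'
  · nlinarith [ht.2]
  have hright := hf _ (hnear (i + 1) i.isLt)
  have hleft := hf _ (hnear i i.isLt.le)
  push_cast at hright hleft
  rw [← add_assoc] at hright
  rw [gridIncrement]
  push_cast
  calc _ ≤ |f (((k : ℝ) + i + 1) / n) - f t| + |f t - f (((k : ℝ) + i) / n)| := abs_sub_le _ _ _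
    _ ≤ 2 * L := by rw [abs_sub_comm (f t)]; linarith

namespace IsStdBM

variable {Ω : Type*} [MeasurableSpace Ω] {P : Measure Ω} {B : ℝ → Ω → ℝ}

lemma measure_abs_sub_le (hB : IsStdBM P B) {s t : ℝ} (hs : 0 ≤ s) (hst : s < t) {a : ℝ}
    (ha : 0 ≤ a) : P {ω | |B t ω - B s ω| ≤ a} ≤ ENNReal.ofReal (a / √(t - s)) := by
  have hset : {ω | |B t ω - B s ω| ≤ a} = (fun ω => B t ω - B s ω) ⁻¹' Icc (-a) a := by
    ext ω; simp [abs_le]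
  have hv : (t - s).toNNReal ≠ 0 := by simpa using hst
  have hmeas : Measurable fun ω => B t ω - B s ω := (hB.meas t).sub (hB.meas s)
  rw [hset, ← Measure.map_apply hmeas measurableSet_Icc, hB.gauss s t hs hst.le]
  simpa [Real.coe_toNNReal _ (sub_nonneg.2 hst.le)] using gaussianReal_Icc_neg_le 0 hv ha

lemma measure_abs_gridIncrement_le (hB : IsStdBM P B) {n : ℕ} (hn : 0 < n) (j : ℕ) {a : ℝ}
    (ha : 0 ≤ a) : P {ω | |gridIncrement (B · ω) n j| ≤ a} ≤ ENNReal.ofReal (a * √n) := by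
  have hstep : ((j : ℝ) + 1) / n - j / n = (n : ℝ)⁻¹ := by field_simp; ring
  have := hB.measure_abs_sub_le (s := j / n) (t := (j + 1) / n) (by positivity)
    (by gcongr; linarith) ha
  rwa [hstep, sqrt_inv, div_inv_eq_mul] at this

lemma measure_iInter_abs_gridIncrement_le (hB : IsStdBM P B) {n : ℕ} (hn : 0 < n) (k N : ℕ)
    {a : ℝ} (ha : 0 ≤ a) :
    P (⋂ i : Fin N, {ω | |gridIncrement (B · ω) n (k + i)| ≤ a})
      ≤ ENNReal.ofReal (a * √n) ^ N := by
  set t : Fin (N + 1) → ℝ := fun j => (k + j : ℕ) / n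
  have ht : Monotone t := fun i j hij => by simp only [t]; gcongr; exact hij
  have hind := hB.indep N t (fun j => by positivity) ht
  have hpre : ∀ i : Fin N, {ω | |gridIncrement (B · ω) n (k + i)| ≤ a}
      = (fun ω => B (t i.succ) ω - B (t i.castSucc) ω) ⁻¹' Icc (-a) a := by
    intro i
    ext ω
    simp [t, gridIncrement, abs_le, add_assoc]
  rw [hind.meas_iInter fun i => ⟨_, measurableSet_Icc, (hpre i).symm⟩]
  calc ∏ i : Fin N, P {ω | |gridIncrement (B · ω) n (k + i)| ≤ a}
      ≤ ∏ _i : Fin N, ENNReal.ofReal (a * √n) :=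
        Finset.prod_le_prod' fun i _ => hB.measure_abs_gridIncrement_le hn _ ha
    _ = ENNReal.ofReal (a * √n) ^ N := by simp

lemma measure_iUnion_iInter_abs_gridIncrement_le (hB : IsStdBM P B) {n : ℕ} (hn : 0 < n)
    (N : ℕ) {a : ℝ} (ha : 0 ≤ a) :
    P (⋃ k ∈ Finset.Icc 1 n, ⋂ i : Fin N, {ω | |gridIncrement (B · ω) n (k + i)| ≤ a})
      ≤ n * ENNReal.ofReal (a * √n) ^ N :=
  calc _ ≤ ∑ k ∈ Finset.Icc 1 n, P (⋂ i : Fin N, {ω | |gridIncrement (B · ω) n (k + i)| ≤ a}) :=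
        measure_biUnion_finset_le _ _
    _ ≤ ∑ _k ∈ Finset.Icc 1 n, ENNReal.ofReal (a * √n) ^ N :=
        Finset.sum_le_sum fun k _ => hB.measure_iInter_abs_gridIncrement_le hn k N ha
    _ = n * ENNReal.ofReal (a * √n) ^ N := by simp

lemma measure_exists_lipschitz_near_eq_zero (hB : IsStdBM P B) {L r : ℝ} (hL : 0 ≤ L)
    (hr : 0 < r) :
    P {ω | ∃ t ∈ Ioc (0 : ℝ) 1, ∀ s, |s - t| ≤ r → |B s ω - B t ω| ≤ L * |s - t|} = 0 := by
  set A := {ω | ∃ t ∈ Ioc (0 : ℝ) 1, ∀ s, |s - t| ≤ r → |B s ω - B t ω| ≤ L * |s - t|}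
  have hcover : ∀ n : ℕ, 0 < n → 4 / n ≤ r → A ⊆ ⋃ k ∈ Finset.Icc 1 n,
      ⋂ i : Fin 3, {ω | |gridIncrement (B · ω) n (k + i)| ≤ 2 * (L * (4 / n))} := by
    rintro n hn hnr ω ⟨t, ht, hlip⟩
    obtain ⟨k, hk, hinc⟩ := exists_forall_abs_gridIncrement_le ht hn 3 fun s hs => by
      norm_num at hs
      exact (hlip s (hs.trans hnr)).trans (mul_le_mul_of_nonneg_left hs hL)
    exact mem_biUnion hk (mem_iInter.2 hinc)
  have hbound : ∀ n : ℕ, 0 < n → 4 / n ≤ r → P A ≤ ENNReal.ofReal (512 * L ^ 3 / √n) := by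
    intro n hn hnr
    have hsq : √(n : ℝ) ^ 2 = n := sq_sqrt n.cast_nonneg
    refine (measure_mono (hcover n hn hnr)).trans <|
      (hB.measure_iUnion_iInter_abs_gridIncrement_le hn 3 (by positivity)).trans_eq ?_
    rw [← ENNReal.ofReal_pow (by positivity), ← ENNReal.ofReal_natCast,
      ← ENNReal.ofReal_mul (by positivity)]
    congr 1
    field_simp
    linear_combination 512 * L ^ 3 * (√(n : ℝ) ^ 2 + n) * hsq
  have htend : Tendsto (fun n : ℕ => ENNReal.ofReal (512 * L ^ 3 / √n)) atTop (𝓝 0) := by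
    rw [← ENNReal.ofReal_zero]
    exact ENNReal.tendsto_ofReal <| tendsto_const_nhds.div_atTop <|
      tendsto_sqrt_atTop.comp tendsto_natCast_atTop_atTop
  refine le_antisymm (ge_of_tendsto htend ?_) zero_le
  filter_upwards [eventually_gt_atTop 0,
    (tendsto_const_div_atTop_nhds_zero_nat 4).eventually (ge_mem_nhds hr)] with n hn hnr
  exact hbound n hn hnr

end IsStdBM

/-- Paley–Wiener–Zygmund: almost surely, the Brownian path is nowhere
differentiable on `(0,1]`. -/
theorem nowhere_differentiable
    {Ω : Type*} [MeasurableSpace Ω] (P : Measure Ω) [IsProbabilityMeasure P]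
    (B : ℝ → Ω → ℝ) (hB : IsStdBM P B) :
    P {ω | ∀ t ∈ Set.Ioc (0 : ℝ) 1, ¬ DifferentiableAt ℝ (fun s => B s ω) t}
      = 1 := by
  -- `T` need not be measurable, so we only show that its complement is null.
  set T := {ω | ∀ t ∈ Set.Ioc (0 : ℝ) 1, ¬ DifferentiableAt ℝ (fun s => B s ω) t}
  have hcompl : Tᶜ ⊆ ⋃ m ∈ Ici (1 : ℕ), {ω | ∃ t ∈ Ioc (0 : ℝ) 1,
      ∀ s, |s - t| ≤ (m : ℝ)⁻¹ → |B s ω - B t ω| ≤ m * |s - t|} := by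
    intro ω hω
    obtain ⟨t, ht, hdiff⟩ : ∃ t ∈ Ioc (0 : ℝ) 1, DifferentiableAt ℝ (fun s => B s ω) t := by
      simpa [T, and_assoc] using hω
    obtain ⟨m, hlip, hm⟩ :=
      (hdiff.eventually_norm_sub_le_nat_mul.and (eventually_ge_atTop 1)).exists
    exact mem_biUnion hm ⟨t, ht, hlip⟩
  have hnull : P Tᶜ = 0 := measure_mono_null hcompl <|
    (measure_biUnion_null_iff (to_countable _)).2 fun m hm =>
      hB.measure_exists_lipschitz_near_eq_zero m.cast_nonneg (inv_pos.2 (Nat.cast_pos.2 hm))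
  rw [measure_congr (ae_eq_univ.2 hnull), measure_univ]
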